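/- Let G = (V, E) be a finite DAG and let E₁ ⊇ E be another edge relation on V. Let V_i, V_j ∈ V be nonadjacent in G, and let T_ij = {V_i, V_j} ∪ {w ∈ V : (w,V_i) ∈ E₁ or (V_i,w) ∈ E₁ or (w,V_j) ∈ E₁ or (V_j,w) ∈ E₁}. Then there exists a set C ⊆ T_ij \ {V_i, V_j} with {V_i} ⊥d {V_j} | C in G. -/

import Mathlib

/-! Basic notions for directed graphs given by an edge relation `E` on a vertex type `V`. -/

/-- Two vertices are adjacent if there is an edge between them in either direction. -/
def UndirAdj {V : Type*} (E : V → V → Prop) (a b : V) : Prop := E a b ∨ E b a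

/-- `Descend E v w` means `w` is a descendant of `v`: it is reachable from `v`
by a directed path of length at least 1. -/
def Descend {V : Type*} (E : V → V → Prop) (v w : V) : Prop := Relation.TransGen E v w

/-- A directed graph is a DAG iff its transitive closure is irreflexive. -/
def IsDAG {V : Type*} (E : V → V → Prop) : Prop := Irreflexive (Relation.TransGen E)

/-- `f 0, f 1, …, f m` is a path: the vertices are distinct and each consecutive
pair is adjacent (in either direction). -/
def IsPathOn {V : Type*} (E : V → V → Prop) (m : ℕ) (f : ℕ → V) : Prop :=
  (∀ i ≤ m, ∀ j ≤ m, f i = f j → i = j) ∧ ∀ i < m, UndirAdj E (f i) (f (i + 1))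

/-- The interior vertex `f i` is a collider on the path `f` if both of its
neighboring path edges point into it. -/
def IsCollider {V : Type*} (E : V → V → Prop) (f : ℕ → V) (i : ℕ) : Prop :=
  E (f (i - 1)) (f i) ∧ E (f (i + 1)) (f i)

/-- The path `f 0, …, f m` is active given the conditioning set `C`: every interior
non-collider is outside `C`, and every interior collider is in `C` or has a
descendant in `C`. -/
def ActivePath {V : Type*} (E : V → V → Prop) (C : Set V) (m : ℕ) (f : ℕ → V) : Prop :=
  IsPathOn E m f ∧ ∀ i, 0 < i → i < m →
    (¬ IsCollider E f i → f i ∉ C) ∧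
    (IsCollider E f i → f i ∈ C ∨ ∃ w ∈ C, Descend E (f i) w)

/-- `C` d-separates `X` and `Y`: no path from a vertex of `X` to a vertex of `Y`
is active given `C`. -/
def DSep {V : Type*} (E : V → V → Prop) (X Y C : Set V) : Prop :=
  ∀ (m : ℕ) (f : ℕ → V), f 0 ∈ X → f m ∈ Y → ¬ ActivePath E C m f

/-- The immoral descendants of `vi, vj`: their common children together with all
descendants of those common children. -/
def IMD {V : Type*} (E : V → V → Prop) (vi vj : V) : Set V :=
  {c | E vi c ∧ E vj c} ∪ {w | ∃ c, E vi c ∧ E vj c ∧ Descend E c w}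

/-- An independence preserving augmentation (IPA) of a nonadjacent pair `(vi, vj)`:
disjoint sets `Si, Sj ⊆ V \ {vi, vj}` such that for some conditioning set `C`
disjoint from `Si ∪ {vi} ∪ Sj ∪ {vj}`, the sets `Si ∪ {vi}` and `Sj ∪ {vj}`
are d-separated given `C`. -/
def IsIPA {V : Type*} (E : V → V → Prop) (vi vj : V) (Si Sj : Set V) : Prop :=
  Disjoint Si Sj ∧ vi ∉ Si ∧ vj ∉ Si ∧ vi ∉ Sj ∧ vj ∉ Sj ∧
  ∃ C : Set V, Disjoint C ((Si ∪ {vi}) ∪ (Sj ∪ {vj})) ∧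
    DSep E (Si ∪ {vi}) (Sj ∪ {vj}) C

/-!
If `vj` is not a descendant of `vi`, the parents of `vi` block every path from `vi` to `vj`:
a path leaving `vi` through a parent has that parent as an interior non-collider, and a path
leaving `vi` along an edge out of it must turn back at a collider that is a descendant of `vi`,
which cannot be activated by a parent of `vi` without closing a directed cycle. In a DAG one of
`vi`, `vj` is not a descendant of the other, and both parent sets lie in `T_ij`.
-/

namespace IsDAG

variable {V : Type*} {E : V → V → Prop}

lemma not_edge_self (hdag : IsDAG E) (a : V) : ¬ E a a :=
  fun h => hdag a (.single h)

lemma not_descend_of_descend (hdag : IsDAG E) {a b : V} (h : Descend E a b) :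
    ¬ Descend E b a :=
  fun h' => hdag a (h.trans h')

end IsDAG

section DSep

variable {V : Type*} {E : V → V → Prop}

lemma UndirAdj.symm {a b : V} (h : UndirAdj E a b) : UndirAdj E b a := Or.symm h

def parents (E : V → V → Prop) (v : V) : Set V := {w | E w v}

lemma descend_of_forall_lt {f : ℕ → V} {k : ℕ} (hrun : ∀ l < k, E (f l) (f (l + 1)))
    (hk : 0 < k) : Descend E (f 0) (f k) :=
  (transGen_of_succ_of_lt (fun i j => E (f i) (f j)) (fun i hi => hrun i hi.2) hk).lift f
    fun _ _ h => h

lemma isCollider_reverse_iff {f : ℕ → V} {m i : ℕ} (hi : 0 < i) (him : i ≤ m) :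
    IsCollider E (fun i => f (m - i)) i ↔ IsCollider E f (m - i) := by
  have h₁ : m - (i - 1) = m - i + 1 := by omega
  have h₂ : m - (i + 1) = m - i - 1 := by omega
  simp only [IsCollider, h₁, h₂, and_comm]

lemma ActivePath.reverse {C : Set V} {m : ℕ} {f : ℕ → V} (h : ActivePath E C m f) :
    ActivePath E C m (fun i => f (m - i)) := by
  obtain ⟨⟨hinj, hadj⟩, hint⟩ := h
  refine ⟨⟨fun i hi j hj hij => ?_, fun i hi => ?_⟩, fun i hi him => ?_⟩
  · have := hinj (m - i) (by omega) (m - j) (by omega) hij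
    omega
  · have h₁ : m - i = m - (i + 1) + 1 := by omega
    simpa only [h₁] using (hadj (m - (i + 1)) (by omega)).symm
  · rw [isCollider_reverse_iff hi him.le]
    exact hint (m - i) (by omega) (by omega)

lemma DSep.symm {X Y C : Set V} (h : DSep E X Y C) : DSep E Y X C :=
  fun m f hf0 hfm hact => h m (fun i => f (m - i)) (by simpa) (by simpa) hact.reverse

theorem dsep_parents_of_not_descend (hdag : IsDAG E) {a b : V} (hab : a ≠ b)
    (hnadj : ¬ UndirAdj E a b) (hnd : ¬ Descend E a b) :
    DSep E {a} {b} (parents E a) := by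
  rintro m f rfl rfl ⟨⟨-, hadj⟩, hint⟩
  have hm : 0 < m := Nat.pos_of_ne_zero fun h => hab (by rw [h])
  by_cases hdir : ∀ l < m, E (f l) (f (l + 1))
  · exact hnd (descend_of_forall_lt hdir hm)
  push Not at hdir
  classical
  obtain ⟨k, ⟨hkm, hk⟩, hrun⟩ : ∃ k, (k < m ∧ ¬ E (f k) (f (k + 1))) ∧
      ∀ l < k, E (f l) (f (l + 1)) := by
    refine ⟨Nat.find hdir, Nat.find_spec hdir, fun l hl => ?_⟩
    have hlm : l < m := hl.trans (Nat.find_spec hdir).1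
    exact not_not.mp (not_and.mp (Nat.find_min hdir hl) hlm)
  have hback : E (f (k + 1)) (f k) := (hadj k hkm).resolve_left hk
  rcases Nat.eq_zero_or_pos k with rfl | hkpos
  · -- `f 1` is a parent of `f 0`, so it must be a collider, which would give a 2-cycle.
    have h1m : 1 < m := by
      by_contra h
      obtain rfl : m = 1 := by omega
      exact hnadj (Or.inr hback)
    by_cases hcol : IsCollider E f 1
    · exact hdag _ ((Relation.TransGen.single hcol.1).tail hback)
    · exact (hint 1 one_pos h1m).1 hcol hback
  · have hdesc : Descend E (f 0) (f k) := descend_of_forall_lt hrun hkpos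
    have hcol : IsCollider E f k :=
      ⟨by simpa [Nat.sub_add_cancel hkpos] using hrun (k - 1) (by omega), hback⟩
    rcases (hint k hkpos hkm).2 hcol with hC | ⟨w, hC, hw⟩
    · exact hdag _ (hdesc.tail hC)
    · exact hdag _ ((hdesc.trans hw).tail hC)

theorem exists_parents_dsep (hdag : IsDAG E) {a b : V} (hab : a ≠ b)
    (hnadj : ¬ UndirAdj E a b) :
    DSep E {a} {b} (parents E a) ∨ DSep E {a} {b} (parents E b) := by
  by_cases hd : Descend E a b
  · exact .inr (dsep_parents_of_not_descend hdag hab.symm (fun h => hnadj h.symm)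
      (hdag.not_descend_of_descend hd)).symm
  · exact .inl (dsep_parents_of_not_descend hdag hab hnadj hd)

lemma parents_subset_compl_pair (hdag : IsDAG E) {a b : V} (hnadj : ¬ UndirAdj E a b) :
    parents E a ⊆ ({a, b} : Set V)ᶜ := by
  rintro w hw (rfl | rfl)
  · exact hdag.not_edge_self w hw
  · exact hnadj (Or.inr hw)

end DSep

theorem stmt_15_general {V : Type*} (E E₁ : V → V → Prop)
    (hsub : ∀ a b : V, E a b → E₁ a b)
    (hdag : IsDAG E) (vi vj : V) (hne : vi ≠ vj)
    (hnadj : ¬ UndirAdj E vi vj)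
    (Tij : Set V)
    (hTij : Tij = {vi, vj} ∪
      {w : V | E₁ w vi ∨ E₁ vi w ∨ E₁ w vj ∨ E₁ vj w}) :
    ∃ C : Set V, C ⊆ Tij \ {vi, vj} ∧ DSep E {vi} {vj} C := by
  subst hTij
  have hpi : parents E vi ⊆ ({vi, vj} : Set V)ᶜ := parents_subset_compl_pair hdag hnadj
  have hpj : parents E vj ⊆ ({vi, vj} : Set V)ᶜ := by
    rw [Set.pair_comm]
    exact parents_subset_compl_pair hdag fun h => hnadj h.symm
  rcases exists_parents_dsep hdag hne hnadj with h | h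
  · exact ⟨_, fun w hw => ⟨.inr (.inl (hsub _ _ hw)), hpi hw⟩, h⟩
  · exact ⟨_, fun w hw => ⟨.inr (.inr (.inr (.inl (hsub _ _ hw)))), hpj hw⟩, h⟩

/-- Lemma: `T_ij` contains a separating set.
Let `G = (V, E)` be a finite DAG, `E₁ ⊇ E` a supergraph relation, and `vi, vj`
nonadjacent in `G`. Then the set `T_ij` consisting of `vi, vj` and all their
distance-1 neighbors in `E₁` contains a set `C ⊆ T_ij \ {vi, vj}` that
d-separates `vi` from `vj` in `G`. -/
theorem stmt_15 {V : Type*} [Fintype V] (E E₁ : V → V → Prop)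
    (hsub : ∀ a b : V, E a b → E₁ a b)
    (hdag : IsDAG E) (vi vj : V) (hne : vi ≠ vj)
    (hnadj : ¬ UndirAdj E vi vj)
    (Tij : Set V)
    (hTij : Tij = {vi, vj} ∪
      {w : V | E₁ w vi ∨ E₁ vi w ∨ E₁ w vj ∨ E₁ vj w}) :
    ∃ C : Set V, C ⊆ Tij \ {vi, vj} ∧ DSep E {vi} {vj} C :=
  stmt_15_general E E₁ hsub hdag vi vj hne hnadj Tij hTij
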